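/- The MFM call price satisfies the large-asset boundary condition: for fixed 0≤t<T, C(t,S)/S → 1 as S → ∞. -/

import Mathlib

open MeasureTheory ProbabilityTheory Real Filter

/-- The standard normal cumulative distribution function `Φ`. -/
noncomputable def stdNormalCDF (x : ℝ) : ℝ :=
  ((ProbabilityTheory.gaussianReal 0 1) (Set.Iic x)).toReal

/-!
Divided by `S`, the `n`-th term of the series is
`w n * (Φ (d₁ n S) - K e^{-r(T-t)} Φ (d₂ n S) / S)`. Since `σ_n > 0`, `d₁ n S → ∞` as `S → ∞`,
so this term tends to `w n`; and as `0 ≤ Φ ≤ 1` it is bounded by `|w n| (1 + K e^{-r(T-t)})` once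
`S ≥ 1`. The Poisson weights `w n` sum to `1`, so dominated convergence for series (Tannery's
theorem) gives `C S / S → 1`.
-/

open scoped Nat Topology

lemma stdNormalCDF_eq_cdf (x : ℝ) : stdNormalCDF x = cdf (gaussianReal 0 1) x :=
  (cdf_eq_real _ x).symm

lemma stdNormalCDF_mem_Icc (x : ℝ) : stdNormalCDF x ∈ Set.Icc 0 1 := by
  rw [stdNormalCDF_eq_cdf]
  exact ⟨cdf_nonneg _ x, cdf_le_one _ x⟩

lemma tendsto_stdNormalCDF_atTop : Tendsto stdNormalCDF atTop (𝓝 1) :=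
  (tendsto_cdf_atTop _).congr fun x => (stdNormalCDF_eq_cdf x).symm

lemma hasSum_exp_neg_mul_pow_div_factorial (x : ℝ) :
    HasSum (fun n : ℕ => exp (-x) * x ^ n / n !) 1 := by
  convert! (NormedSpace.expSeries_div_hasSum_exp x).mul_left (exp (-x)) using 1
  · simp_rw [mul_div_assoc]
  · rw [← exp_eq_exp_ℝ, ← exp_add, neg_add_cancel, exp_zero]

lemma tendsto_log_div_add_div_atTop {K a : ℝ} (hK : 0 < K) (ha : 0 < a) (b : ℝ) :
    Tendsto (fun S => (log (S / K) + b) / a) atTop atTop :=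
  ((tendsto_log_atTop.comp (tendsto_id.atTop_div_const hK)).atTop_add
    tendsto_const_nhds).atTop_div_const ha

lemma abs_div_stdNormalCDF_le {S : ℝ} (hS : 0 < S) (c x : ℝ) :
    |c * stdNormalCDF x / S| ≤ |c| / S := by
  obtain ⟨hΦ₀, hΦ₁⟩ := stdNormalCDF_mem_Icc x
  rw [abs_div, abs_mul, abs_of_nonneg hΦ₀, abs_of_pos hS]
  gcongr
  exact mul_le_of_le_one_right (abs_nonneg c) hΦ₁

lemma abs_mul_stdNormalCDF_sub_div_le {S : ℝ} (hS : 1 ≤ S) (c x y : ℝ) :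
    |(S * stdNormalCDF x - c * stdNormalCDF y) / S| ≤ 1 + |c| := by
  have hS₀ : 0 < S := one_pos.trans_le hS
  rw [sub_div, mul_div_cancel_left₀ _ hS₀.ne']
  obtain ⟨hΦ₀, hΦ₁⟩ := stdNormalCDF_mem_Icc x
  calc |stdNormalCDF x - c * stdNormalCDF y / S|
      ≤ |stdNormalCDF x| + |c * stdNormalCDF y / S| := abs_sub _ _
    _ ≤ 1 + |c| / S := by
      gcongr
      · exact abs_le.mpr ⟨by linarith, hΦ₁⟩
      · exact abs_div_stdNormalCDF_le hS₀ c y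
    _ ≤ 1 + |c| := by gcongr; exact div_le_self (abs_nonneg c) hS

lemma tendsto_mul_stdNormalCDF_sub_div {d₁ d₂ : ℝ → ℝ} (hd₁ : Tendsto d₁ atTop atTop) (c : ℝ) :
    Tendsto (fun S => (S * stdNormalCDF (d₁ S) - c * stdNormalCDF (d₂ S)) / S) atTop (𝓝 1) := by
  have hsecond : Tendsto (fun S => c * stdNormalCDF (d₂ S) / S) atTop (𝓝 0) := by
    refine squeeze_zero_norm' (a := fun S => |c| / S) ?_ (tendsto_const_nhds.div_atTop tendsto_id)
    filter_upwards [eventually_gt_atTop 0] with S hS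
    exact abs_div_stdNormalCDF_le hS c (d₂ S)
  have hlim := (tendsto_stdNormalCDF_atTop.comp hd₁).sub hsecond
  rw [sub_zero] at hlim
  refine hlim.congr' ?_
  filter_upwards [eventually_gt_atTop 0] with S hS
  rw [sub_div, mul_div_cancel_left₀ _ hS.ne', Function.comp_apply]

theorem tendsto_tsum_mul_stdNormalCDF_sub_div {w : ℕ → ℝ} (hw : HasSum w 1)
    {d₁ d₂ : ℕ → ℝ → ℝ} (hd₁ : ∀ n, Tendsto (d₁ n) atTop atTop) (c : ℝ) :
    Tendsto (fun S => (∑' n, w n * (S * stdNormalCDF (d₁ n S) - c * stdNormalCDF (d₂ n S))) / S)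
      atTop (𝓝 1) := by
  have hlim := tendsto_tsum_of_dominated_convergence
    (f := fun S n => w n * ((S * stdNormalCDF (d₁ n S) - c * stdNormalCDF (d₂ n S)) / S))
    (g := w) (bound := fun n => |w n| * (1 + |c|)) (hw.summable.abs.mul_right _)
    (fun n => by simpa using (tendsto_mul_stdNormalCDF_sub_div (hd₁ n) c).const_mul (w n))
    (by
      filter_upwards [eventually_ge_atTop 1] with S hS n
      rw [norm_mul, norm_eq_abs, norm_eq_abs]
      exact mul_le_mul_of_nonneg_left (abs_mul_stdNormalCDF_sub_div_le hS c _ _) (abs_nonneg _))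
  rw [hw.tsum_eq] at hlim
  refine hlim.congr fun S => ?_
  simp only [← tsum_div_const, mul_div_assoc]

theorem mfm_call_large_asset_boundary_general
    (K r t T σ σH Hu σJ k δt : ℝ)
    (hK : 0 < K) (htT : t < T)
    (hσ : 0 < σ) (hk : 0 ≤ k) (hδt : 0 < δt)
    (σhat2 lam' : ℝ)
    (hσhat2 : σhat2 = σ ^ 2 + σH ^ 2 * δt ^ (2 * Hu - 1)
      + k * Real.sqrt ((2 / Real.pi) * (σ ^ 2 / δt + σH ^ 2 * δt ^ (2 * Hu - 2))))
    (σn rn w : ℕ → ℝ) (d1 d2 : ℕ → ℝ → ℝ)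
    (hσn : ∀ n, σn n = Real.sqrt (σhat2 + n * σJ ^ 2 / (T - t)))
    (hd1 : ∀ n S, 0 < S → d1 n S = (Real.log (S / K) + rn n * (T - t)
      + (σn n) ^ 2 * (T - t) / 2) / (σn n * Real.sqrt (T - t)))
    (hw : ∀ n, w n = Real.exp (-lam' * (T - t)) * (lam' * (T - t)) ^ n / n.factorial)
    (C : ℝ → ℝ)
    (hC : ∀ S, 0 < S → C S = ∑' n, w n
      * (S * stdNormalCDF (d1 n S) - K * Real.exp (-r * (T - t)) * stdNormalCDF (d2 n S))) :
    Tendsto (fun S => C S / S) atTop (nhds 1) := by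
  have hτ : 0 < T - t := sub_pos.mpr htT
  have hσhat2_pos : 0 < σhat2 := by rw [hσhat2]; positivity
  have hd1_atTop (n : ℕ) : Tendsto (d1 n) atTop atTop := by
    have hvol : 0 < σn n * √(T - t) := by rw [hσn]; positivity
    refine (tendsto_log_div_add_div_atTop hK hvol
      (rn n * (T - t) + σn n ^ 2 * (T - t) / 2)).congr' ?_
    filter_upwards [eventually_gt_atTop 0] with S hS
    rw [hd1 n S hS, add_assoc]
  have hw_sum : HasSum w 1 := by
    convert hasSum_exp_neg_mul_pow_div_factorial (lam' * (T - t)) using 2 with n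
    rw [hw, neg_mul]
  refine (tendsto_tsum_mul_stdNormalCDF_sub_div (d₂ := d2) hw_sum hd1_atTop
    (K * exp (-r * (T - t)))).congr' ?_
  filter_upwards [eventually_gt_atTop 0] with S hS
  rw [hC S hS]

/-- Large-asset boundary condition for the MFM call price: `C(t,S)/S → 1` as `S → ∞`. -/
theorem mfm_call_large_asset_boundary
    (K r t T σ σH Hu μJ σJ lam k δt : ℝ)
    (hK : 0 < K) (ht : 0 ≤ t) (htT : t < T)
    (hσ : 0 < σ) (hσH : 0 < σH) (hH1 : 3 / 4 < Hu) (hH2 : Hu < 1)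
    (hσJ : 0 < σJ) (hlam : 0 < lam) (hk : 0 ≤ k) (hδt : 0 < δt)
    (σhat2 lam' : ℝ)
    (hσhat2 : σhat2 = σ ^ 2 + σH ^ 2 * δt ^ (2 * Hu - 1)
      + k * Real.sqrt ((2 / Real.pi) * (σ ^ 2 / δt + σH ^ 2 * δt ^ (2 * Hu - 2))))
    (hlam' : lam' = lam * Real.exp (μJ + σJ ^ 2 / 2))
    (σn rn w : ℕ → ℝ) (d1 d2 : ℕ → ℝ → ℝ)
    (hσn : ∀ n, σn n = Real.sqrt (σhat2 + n * σJ ^ 2 / (T - t)))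
    (hrn : ∀ n, rn n = r - lam * (Real.exp (μJ + σJ ^ 2 / 2) - 1)
      + n * (μJ + σJ ^ 2 / 2) / (T - t))
    (hd1 : ∀ n S, 0 < S → d1 n S = (Real.log (S / K) + rn n * (T - t)
      + (σn n) ^ 2 * (T - t) / 2) / (σn n * Real.sqrt (T - t)))
    (hd2 : ∀ n S, 0 < S → d2 n S = d1 n S - σn n * Real.sqrt (T - t))
    (hw : ∀ n, w n = Real.exp (-lam' * (T - t)) * (lam' * (T - t)) ^ n / n.factorial)
    (C : ℝ → ℝ)
    (hC : ∀ S, 0 < S → C S = ∑' n, w n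
      * (S * stdNormalCDF (d1 n S) - K * Real.exp (-r * (T - t)) * stdNormalCDF (d2 n S))) :
    Tendsto (fun S => C S / S) atTop (nhds 1) :=
  mfm_call_large_asset_boundary_general K r t T σ σH Hu σJ k δt hK htT hσ hk hδt σhat2 lam' hσhat2
    σn rn w d1 d2 hσn hd1 hw C hC
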